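/- arXiv:2102.09042 — 2 statements merged into one kernel-verified Lean document; each statement's English description precedes it below -/
import Mathlib

section
/- Let $F_1,\dots,F_d$ be continuous CDFs on $\mathbb{R}$, let $A:\Delta_{d-1}\to[0,1]$ be a Pickands dependence function, and suppose the random vector $(M^{(1)},\dots,M^{(d)})$ has joint CDF given by the extreme value copula $C(u_1,\dots,u_d)=\exp\big((\sum_k \log u_k)\,A(\log u_1/\sum_k\log u_k,\dots,\log u_d/\sum_k\log u_k)\big)$ applied to $(F_1(x_1),\dots,F_d(x_d))$. For fixed $w=(w_1,\dots,w_d)$ in the open simplex, define $Z_w=\min_{1\le k\le d}(-\log F_k(M^{(k)}))/w_k$. Then $Z_w$ is exponentially distributed with rate $A(w)$, i.e. $\mathbb{P}[Z_w>z]=e^{-zA(w)}$ for all $z>0$. -/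
open MeasureTheory Real Set Filter Topology

theorem pickands_transform_exponential
    {Ω : Type*} [MeasurableSpace Ω] (μ : Measure Ω) [IsProbabilityMeasure μ]
    (d : ℕ) (hd : 0 < d)
    (F : Fin d → ℝ → ℝ) (hFcont : ∀ k, Continuous (F k)) (hFmono : ∀ k, Monotone (F k))
    (hF0 : ∀ k, Tendsto (F k) atBot (nhds 0)) (hF1 : ∀ k, Tendsto (F k) atTop (nhds 1))
    (A : (Fin d → ℝ) → ℝ)
    (hAconv : ConvexOn ℝ (stdSimplex ℝ (Fin d)) A)
    (hAbounds : ∀ v ∈ stdSimplex ℝ (Fin d), (∀ k, v k ≤ A v) ∧ A v ≤ 1)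
    (M : Ω → Fin d → ℝ) (hM : Measurable M)
    (hCDF : ∀ x : Fin d → ℝ, (∀ k, 0 < F k (x k)) →
      (μ {ω | ∀ k, M ω k ≤ x k}).toReal =
        Real.exp ((∑ k, Real.log (F k (x k))) *
          A (fun k => Real.log (F k (x k)) / ∑ j, Real.log (F j (x j)))))
    (w : Fin d → ℝ) (hw : w ∈ stdSimplex ℝ (Fin d)) (hwpos : ∀ k, 0 < w k) :
    ∀ z > 0, (μ {ω | z < ⨅ k, (-Real.log (F k (M ω k))) / w k}).toReal =
      Real.exp (-z * A w) := by
  have hne : Nonempty (Fin d) := ⟨⟨0, hd⟩⟩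
  have hF_nonneg : ∀ k t, 0 ≤ F k t := fun k t => (hFmono k).le_of_tendsto (hF0 k) t
  have hF_le_one : ∀ k t, F k t ≤ 1 := fun k t => (hFmono k).ge_of_tendsto (hF1 k) t
  -- IVT surjectivity onto (0,1)
  have hsurj : ∀ k, ∀ ε : ℝ, 0 < ε → ε < 1 → ∃ y, F k y = ε := by
    intro k ε hε0 hε1
    obtain ⟨a, ha⟩ := ((hF0 k).eventually_lt_const hε0).exists
    obtain ⟨b, hb⟩ := ((hF1 k).eventually_const_lt hε1).exists
    have hab : a ≤ b := by
      by_contra h; push_neg at h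
      have := hFmono k h.le
      linarith
    obtain ⟨y, _, hy⟩ := intermediate_value_Icc hab (hFcont k).continuousOn ⟨ha.le, hb.le⟩
    exact ⟨y, hy⟩
  -- key upper bound from the CDF formula
  have hbound : ∀ (x : Fin d → ℝ) (k : Fin d) (ε : ℝ), 0 < ε → ε < 1 →
      (∀ j, 0 < F j (x j)) → F k (x k) ≤ ε →
      μ {ω | ∀ j, M ω j ≤ x j} ≤ ENNReal.ofReal ε := by
    intro x k ε hε0 hε1 hpos hk
    have hulog : ∀ j, Real.log (F j (x j)) ≤ 0 := fun j =>
      Real.log_nonpos (hpos j).le (hF_le_one j (x j))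
    set S : ℝ := ∑ j, Real.log (F j (x j)) with hS
    have hSk : S ≤ Real.log (F k (x k)) := by
      have h1 : S = Real.log (F k (x k)) + ∑ j ∈ Finset.univ.erase k, Real.log (F j (x j)) :=
        hS.trans (Finset.add_sum_erase Finset.univ
          (fun j => Real.log (F j (x j))) (Finset.mem_univ k)).symm
      have h2 : ∑ j ∈ Finset.univ.erase k, Real.log (F j (x j)) ≤ 0 :=
        Finset.sum_nonpos fun j _ => hulog j
      linarith
    have hlogε : Real.log (F k (x k)) ≤ Real.log ε :=
      Real.log_le_log (hpos k) hk
    have hSneg : S < 0 := lt_of_le_of_lt (hSk.trans hlogε) (Real.log_neg hε0 hε1)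
    have hSne : S ≠ 0 := hSneg.ne
    set v : Fin d → ℝ := fun j => Real.log (F j (x j)) / S with hv
    have hvmem : v ∈ stdSimplex ℝ (Fin d) := by
      constructor
      · intro j
        exact div_nonneg_of_nonpos (hulog j) hSneg.le
      · rw [hv]
        simp only
        rw [← Finset.sum_div, div_self hSne]
    have hAv : v k ≤ A v := (hAbounds v hvmem).1 k
    have hmu : (μ {ω | ∀ j, M ω j ≤ x j}).toReal = Real.exp (S * A v) := hCDF x hpos
    have hle : Real.exp (S * A v) ≤ ε := by
      have h1 : S * A v ≤ S * v k := mul_le_mul_of_nonpos_left hAv hSneg.le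
      have h2 : S * v k = Real.log (F k (x k)) := by
        rw [hv]; field_simp
      calc Real.exp (S * A v) ≤ Real.exp (S * v k) := Real.exp_le_exp.mpr h1
        _ = F k (x k) := by rw [h2, Real.exp_log (hpos k)]
        _ ≤ ε := hk
    rw [ENNReal.le_ofReal_iff_toReal_le (measure_ne_top μ _) hε0.le, hmu]
    exact hle
  -- the events {F_k(M_k) = 0} are null
  have hnull : ∀ k, μ {ω | F k (M ω k) = 0} = 0 := by
    intro k
    have key : ∀ ε : ℝ, 0 < ε → ε < 1 →
        μ {ω | F k (M ω k) = 0} ≤ ENNReal.ofReal ε := by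
      intro ε hε0 hε1
      obtain ⟨y, hy⟩ := hsurj k ε hε0 hε1
      have hb : ∀ j, ∃ c, 0 < F j c := fun j =>
        ((hF1 j).eventually_const_lt (by norm_num : (0:ℝ) < 1)).exists
      choose b hbpos using hb
      set s : ℕ → Set Ω :=
        fun n => {ω | ∀ j, M ω j ≤ if j = k then y else b j + (n : ℝ)} with hs
      have hmono : Monotone s := by
        intro m n hmn ω hω j
        have h1 := hω j
        change M ω j ≤ (if j = k then y else b j + (m : ℝ)) at h1
        change M ω j ≤ if j = k then y else b j + (n : ℝ)
        split_ifs at h1 ⊢ with h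
        · exact h1
        · have : (m : ℝ) ≤ n := Nat.cast_le.mpr hmn
          linarith
      have hsub : {ω | F k (M ω k) = 0} ⊆ ⋃ n, s n := by
        intro ω hω
        simp only [mem_setOf_eq] at hω
        obtain ⟨n, hn⟩ := exists_nat_ge (Finset.univ.sup' ⟨k, Finset.mem_univ k⟩
          (fun j => M ω j - b j))
        refine mem_iUnion.mpr ⟨n, fun j => ?_⟩
        show M ω j ≤ if j = k then y else b j + (n : ℝ)
        split_ifs with h
        · subst h
          by_contra hlt; push_neg at hlt
          have h2 : F j y ≤ F j (M ω j) := hFmono j hlt.le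
          rw [hy, hω] at h2
          linarith
        · have h3 : M ω j - b j ≤ n :=
            le_trans (Finset.le_sup' (fun j => M ω j - b j) (Finset.mem_univ j)) hn
          linarith
      calc μ {ω | F k (M ω k) = 0} ≤ μ (⋃ n, s n) := measure_mono hsub
        _ = ⨆ n, μ (s n) := hmono.directed_le.measure_iUnion
        _ ≤ ENNReal.ofReal ε := by
            refine iSup_le fun n =>
              hbound (fun j => if j = k then y else b j + (n : ℝ)) k ε hε0 hε1 ?_ ?_
            · intro j
              show 0 < F j (if j = k then y else b j + (n : ℝ))
              split_ifs with h
              · subst h; rw [hy]; exact hε0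
              · exact lt_of_lt_of_le (hbpos j)
                  (hFmono j (le_add_of_nonneg_right (Nat.cast_nonneg n)))
            · show F k (if k = k then y else b k + (n : ℝ)) ≤ ε
              simp [hy]
    refine le_antisymm ?_ (zero_le)
    refine ENNReal.le_of_forall_pos_le_add fun ε hε _ => ?_
    rw [zero_add]
    rcases le_or_gt 1 (ε : ℝ) with h | h
    · calc μ {ω | F k (M ω k) = 0} ≤ 1 := prob_le_one
        _ ≤ (ε : ENNReal) := by
            rw [← ENNReal.ofReal_one, ← ENNReal.ofReal_coe_nnreal]
            exact ENNReal.ofReal_le_ofReal h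
    · rw [← ENNReal.ofReal_coe_nnreal]
      exact key ε (by exact_mod_cast hε) h
  -- points x(t) with F k (x k) = exp (-(t * w k))
  have hX : ∀ t : ℝ, 0 < t → ∃ x : Fin d → ℝ,
      ∀ k, F k (x k) = Real.exp (-(t * w k)) := by
    intro t ht
    have h : ∀ k, ∃ y, F k y = Real.exp (-(t * w k)) := by
      intro k
      refine hsurj k _ (Real.exp_pos _) ?_
      have : -(t * w k) < 0 := by
        have := mul_pos ht (hwpos k); linarith
      calc Real.exp (-(t * w k)) < Real.exp 0 := Real.exp_lt_exp.mpr this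
        _ = 1 := Real.exp_zero
    exact ⟨fun k => (h k).choose, fun k => (h k).choose_spec⟩
  have hXval : ∀ t : ℝ, 0 < t → ∀ x : Fin d → ℝ,
      (∀ k, F k (x k) = Real.exp (-(t * w k))) →
      (μ {ω | ∀ k, M ω k ≤ x k}).toReal = Real.exp (-t * A w) := by
    intro t ht x hx
    have hpos : ∀ k, 0 < F k (x k) := fun k => (hx k).symm ▸ Real.exp_pos _
    have hlog : ∀ k, Real.log (F k (x k)) = -(t * w k) := fun k => by
      rw [hx k, Real.log_exp]
    have hsum : ∑ j, Real.log (F j (x j)) = -t := by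
      calc ∑ j, Real.log (F j (x j)) = ∑ j, (-t) * w j := by
            refine Finset.sum_congr rfl fun j _ => ?_
            rw [hlog j]; ring
        _ = (-t) * ∑ j, w j := (Finset.mul_sum _ _ _).symm
        _ = -t := by rw [hw.2, mul_one]
    have hrat : (fun k => Real.log (F k (x k)) / ∑ j, Real.log (F j (x j))) = w := by
      funext k
      rw [hlog k, hsum, div_eq_iff (neg_ne_zero.mpr ht.ne')]
      ring
    rw [hCDF x hpos, hrat, hsum]
  intro z hz
  have hbdd : ∀ ω : Ω, BddBelow (Set.range fun k => (-Real.log (F k (M ω k))) / w k) :=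
    fun ω => (Set.finite_range _).bddBelow
  obtain ⟨x, hx⟩ := hX z hz
  have hupper : {ω | z < ⨅ k, (-Real.log (F k (M ω k))) / w k} ⊆
      {ω | ∀ k, M ω k ≤ x k} := by
    intro ω hω k
    simp only [mem_setOf_eq] at hω
    have h1 : z < (-Real.log (F k (M ω k))) / w k :=
      lt_of_lt_of_le hω (ciInf_le (hbdd ω) k)
    have h2 : Real.log (F k (M ω k)) < -(z * w k) := by
      rw [lt_div_iff₀ (hwpos k)] at h1; linarith
    by_contra hcon
    push_neg at hcon
    have h3 : F k (x k) ≤ F k (M ω k) := hFmono k hcon.le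
    rw [hx k] at h3
    have h5 : -(z * w k) ≤ Real.log (F k (M ω k)) := by
      calc -(z * w k) = Real.log (Real.exp (-(z * w k))) := (Real.log_exp _).symm
        _ ≤ _ := Real.log_le_log (Real.exp_pos _) h3
    linarith
  have hup : (μ {ω | z < ⨅ k, (-Real.log (F k (M ω k))) / w k}).toReal ≤
      Real.exp (-z * A w) := by
    rw [← hXval z hz x hx]
    exact ENNReal.toReal_mono (measure_ne_top μ _) (measure_mono hupper)
  set N : Set Ω := ⋃ k, {ω | F k (M ω k) = 0} with hNdef
  have hN : μ N = 0 := measure_iUnion_null fun k => hnull k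
  have hlow : ∀ t : ℝ, z < t →
      Real.exp (-t * A w) ≤
        (μ {ω | z < ⨅ k, (-Real.log (F k (M ω k))) / w k}).toReal := by
    intro t hzt
    have ht : 0 < t := hz.trans hzt
    obtain ⟨x', hx'⟩ := hX t ht
    have hsub : {ω | ∀ k, M ω k ≤ x' k} \ N ⊆
        {ω | z < ⨅ k, (-Real.log (F k (M ω k))) / w k} := by
      rintro ω ⟨hω, hωN⟩
      simp only [hNdef, mem_iUnion, mem_setOf_eq, not_exists] at hωN
      have hpos : ∀ k, 0 < F k (M ω k) := fun k =>
        lt_of_le_of_ne (hF_nonneg k _) (Ne.symm (hωN k))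
      have hall : ∀ k, t ≤ (-Real.log (F k (M ω k))) / w k := by
        intro k
        have h1 : F k (M ω k) ≤ Real.exp (-(t * w k)) := (hx' k) ▸ hFmono k (hω k)
        have h2 : Real.log (F k (M ω k)) ≤ -(t * w k) := by
          calc Real.log (F k (M ω k)) ≤ Real.log (Real.exp (-(t * w k))) :=
                Real.log_le_log (hpos k) h1
            _ = -(t * w k) := Real.log_exp _
        rw [le_div_iff₀ (hwpos k)]; linarith
      have h3 : t ≤ ⨅ k, (-Real.log (F k (M ω k))) / w k := le_ciInf hall
      exact lt_of_lt_of_le hzt h3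
    have hmeas : μ {ω | ∀ k, M ω k ≤ x' k} ≤
        μ {ω | z < ⨅ k, (-Real.log (F k (M ω k))) / w k} := by
      calc μ {ω | ∀ k, M ω k ≤ x' k}
          ≤ μ (({ω | ∀ k, M ω k ≤ x' k} \ N) ∪ N) := by
            refine measure_mono ?_
            intro ω hω
            by_cases h : ω ∈ N
            exacts [Or.inr h, Or.inl ⟨hω, h⟩]
        _ ≤ μ ({ω | ∀ k, M ω k ≤ x' k} \ N) + μ N := measure_union_le _ _
        _ = μ ({ω | ∀ k, M ω k ≤ x' k} \ N) := by rw [hN, add_zero]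
        _ ≤ _ := measure_mono hsub
    rw [← hXval t ht x' hx']
    exact ENNReal.toReal_mono (measure_ne_top μ _) hmeas
  have hlim : Tendsto (fun t : ℝ => Real.exp (-t * A w)) (𝓝[>] z)
      (𝓝 (Real.exp (-z * A w))) := by
    apply Tendsto.mono_left _ nhdsWithin_le_nhds
    exact Continuous.tendsto (by continuity) z
  have hge : Real.exp (-z * A w) ≤
      (μ {ω | z < ⨅ k, (-Real.log (F k (M ω k))) / w k}).toReal :=
    le_of_tendsto hlim (eventually_nhdsWithin_of_forall fun t ht => hlow t ht)
  linarith
end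

section
/- Let $A$ be a bivariate Pickands dependence function (convex on $[0,1]$ with $\max(w,1-w)\le A(w)\le 1$), and let $C(u,v)=\exp((\log uv)\,A(\frac{\log u}{\log uv}))$ for $u,v\in(0,1)$. Then for all $0<u\le u'\le 1$ and $0<v\le v'\le 1$, the rectangle inequality $C(u',v')-C(u',v)-C(u,v')+C(u,v)\ge 0$ holds; i.e., $C$ is 2-increasing and hence a genuine copula. -/
open MeasureTheory Real Set Filter Topology

/-- The (negated-log) stable tail dependence function built from a Pickands
dependence function `A`. -/
noncomputable def evPl (A : ℝ → ℝ) (x y : ℝ) : ℝ := (x + y) * A (x / (x + y))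

lemma evPl_A_zero (A : ℝ → ℝ)
    (hbounds : ∀ w ∈ Icc (0:ℝ) 1, max w (1-w) ≤ A w ∧ A w ≤ 1) : A 0 = 1 := by
  have h := hbounds 0 (by norm_num)
  have h1 : (1:ℝ) ≤ A 0 := le_trans (by norm_num) h.1
  linarith [h.2]

lemma evPl_A_one (A : ℝ → ℝ)
    (hbounds : ∀ w ∈ Icc (0:ℝ) 1, max w (1-w) ≤ A w ∧ A w ≤ 1) : A 1 = 1 := by
  have h := hbounds 1 (by norm_num)
  have h1 : (1:ℝ) ≤ A 1 := le_trans (by norm_num) h.1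
  linarith [h.2]

lemma evPl_zero_zero (A : ℝ → ℝ) : evPl A 0 0 = 0 := by
  simp [evPl]

lemma evPl_smul (A : ℝ → ℝ) {b : ℝ} (hb : 0 < b) (x y : ℝ) :
    evPl A (b*x) (b*y) = b * evPl A x y := by
  unfold evPl
  rw [show b*x + b*y = b*(x+y) by ring, mul_div_mul_left x (x+y) hb.ne']
  ring

lemma evPl_mem_Icc {x y : ℝ} (hx : 0 ≤ x) (hy : 0 ≤ y) (hxy : 0 < x + y) :
    x / (x + y) ∈ Icc (0:ℝ) 1 :=
  ⟨div_nonneg hx hxy.le, (div_le_one hxy).2 (by linarith)⟩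

lemma le_evPl_left (A : ℝ → ℝ)
    (hbounds : ∀ w ∈ Icc (0:ℝ) 1, max w (1-w) ≤ A w ∧ A w ≤ 1)
    {x y : ℝ} (hx : 0 ≤ x) (hy : 0 ≤ y) : x ≤ evPl A x y := by
  rcases eq_or_lt_of_le (by linarith : (0:ℝ) ≤ x + y) with h | h
  · have hx0 : x = 0 := by linarith
    have hy0 : y = 0 := by linarith
    rw [hx0, hy0, evPl_zero_zero]
  · have hw := evPl_mem_Icc hx hy h
    have hA := (hbounds _ hw).1
    have hwA : x / (x+y) ≤ A (x/(x+y)) := le_trans (le_max_left _ _) hA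
    have : (x+y) * (x/(x+y)) ≤ (x+y) * A (x/(x+y)) :=
      mul_le_mul_of_nonneg_left hwA h.le
    rwa [mul_div_cancel₀ x h.ne'] at this

lemma le_evPl_right (A : ℝ → ℝ)
    (hbounds : ∀ w ∈ Icc (0:ℝ) 1, max w (1-w) ≤ A w ∧ A w ≤ 1)
    {x y : ℝ} (hx : 0 ≤ x) (hy : 0 ≤ y) : y ≤ evPl A x y := by
  rcases eq_or_lt_of_le (by linarith : (0:ℝ) ≤ x + y) with h | h
  · have hx0 : x = 0 := by linarith
    have hy0 : y = 0 := by linarith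
    rw [hx0, hy0, evPl_zero_zero]
  · have hw := evPl_mem_Icc hx hy h
    have hA := (hbounds _ hw).1
    have hwA : 1 - x / (x+y) ≤ A (x/(x+y)) := le_trans (le_max_right _ _) hA
    have h2 : 1 - x/(x+y) = y/(x+y) := by field_simp; ring
    rw [h2] at hwA
    have : (x+y) * (y/(x+y)) ≤ (x+y) * A (x/(x+y)) :=
      mul_le_mul_of_nonneg_left hwA h.le
    rwa [mul_div_cancel₀ y h.ne'] at this

lemma evPl_nonneg (A : ℝ → ℝ)
    (hbounds : ∀ w ∈ Icc (0:ℝ) 1, max w (1-w) ≤ A w ∧ A w ≤ 1)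
    {x y : ℝ} (hx : 0 ≤ x) (hy : 0 ≤ y) : 0 ≤ evPl A x y :=
  le_trans hx (le_evPl_left A hbounds hx hy)

lemma evPl_zero_left (A : ℝ → ℝ)
    (hbounds : ∀ w ∈ Icc (0:ℝ) 1, max w (1-w) ≤ A w ∧ A w ≤ 1)
    {y : ℝ} : evPl A 0 y = y := by
  unfold evPl
  rw [zero_div, evPl_A_zero A hbounds]
  ring

lemma evPl_zero_right (A : ℝ → ℝ)
    (hbounds : ∀ w ∈ Icc (0:ℝ) 1, max w (1-w) ≤ A w ∧ A w ≤ 1)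
    {x : ℝ} (hx : 0 ≤ x) : evPl A x 0 = x := by
  rcases eq_or_lt_of_le hx with h | h
  · rw [← h, evPl_zero_zero]
  · unfold evPl
    rw [add_zero, div_self h.ne', evPl_A_one A hbounds]
    ring

/-- Degenerate case of sublinearity, when the first weighted point vanishes. -/
lemma evPl_sublinear_deg (A : ℝ → ℝ)
    (hbounds : ∀ w ∈ Icc (0:ℝ) 1, max w (1-w) ≤ A w ∧ A w ≤ 1)
    {x y x' y' a b : ℝ} (hx : 0 ≤ x) (hy : 0 ≤ y) (hx' : 0 ≤ x') (hy' : 0 ≤ y')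
    (ha : 0 ≤ a) (hb : 0 ≤ b) (h1 : a * (x + y) = 0) :
    evPl A (a*x + b*x') (a*y + b*y') ≤ a * evPl A x y + b * evPl A x' y' := by
  have hax : a * x = 0 :=
    le_antisymm (by nlinarith [mul_nonneg ha hy]) (mul_nonneg ha hx)
  have hay : a * y = 0 :=
    le_antisymm (by nlinarith [mul_nonneg ha hx]) (mul_nonneg ha hy)
  have hal : a * evPl A x y = 0 := by
    rcases mul_eq_zero.1 h1 with h | h
    · rw [h, zero_mul]
    · have hx0 : x = 0 := by linarith
      have hy0 : y = 0 := by linarith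
      rw [hx0, hy0, evPl_zero_zero, mul_zero]
  rw [hax, hay, zero_add, zero_add, hal, zero_add]
  rcases eq_or_lt_of_le hb with h | h
  · rw [← h]
    simp [evPl_zero_zero]
  · rw [evPl_smul A h]

/-- Sublinearity of the stable tail dependence function. -/
lemma evPl_sublinear (A : ℝ → ℝ) (hconv : ConvexOn ℝ (Icc (0:ℝ) 1) A)
    (hbounds : ∀ w ∈ Icc (0:ℝ) 1, max w (1-w) ≤ A w ∧ A w ≤ 1)
    {x y x' y' a b : ℝ} (hx : 0 ≤ x) (hy : 0 ≤ y) (hx' : 0 ≤ x') (hy' : 0 ≤ y')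
    (ha : 0 ≤ a) (hb : 0 ≤ b) :
    evPl A (a*x + b*x') (a*y + b*y') ≤ a * evPl A x y + b * evPl A x' y' := by
  by_cases h1 : a * (x + y) = 0
  · exact evPl_sublinear_deg A hbounds hx hy hx' hy' ha hb h1
  by_cases h2 : b * (x' + y') = 0
  · have H := evPl_sublinear_deg A hbounds hx' hy' hx hy hb ha h2
    rw [show b*x' + a*x = a*x + b*x' by ring, show b*y' + a*y = a*y + b*y' by ring] at H
    linarith
  -- main case
  have hxy : 0 < x + y := by
    rcases (mul_ne_zero_iff.1 h1) with ⟨ha0, hxy0⟩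
    exact lt_of_le_of_ne (by linarith) (Ne.symm hxy0)
  have ha0 : 0 < a := by
    rcases (mul_ne_zero_iff.1 h1) with ⟨ha0, _⟩
    exact lt_of_le_of_ne ha (Ne.symm ha0)
  have hxy' : 0 < x' + y' := by
    rcases (mul_ne_zero_iff.1 h2) with ⟨hb0, hxy0⟩
    exact lt_of_le_of_ne (by linarith) (Ne.symm hxy0)
  have hb0 : 0 < b := by
    rcases (mul_ne_zero_iff.1 h2) with ⟨hb0, _⟩
    exact lt_of_le_of_ne hb (Ne.symm hb0)
  have hS : 0 < a*(x+y) + b*(x'+y') := by positivity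
  have hw := evPl_mem_Icc hx hy hxy
  have hw' := evPl_mem_Icc hx' hy' hxy'
  have hθ1 : 0 ≤ a*(x+y) / (a*(x+y) + b*(x'+y')) := by positivity
  have hθ2 : 0 ≤ b*(x'+y') / (a*(x+y) + b*(x'+y')) := by positivity
  have hθsum : a*(x+y) / (a*(x+y) + b*(x'+y')) + b*(x'+y') / (a*(x+y) + b*(x'+y')) = 1 := by
    field_simp
  have hA := hconv.2 hw hw' hθ1 hθ2 hθsum
  simp only [smul_eq_mul] at hA
  have hsum : (a*x + b*x') + (a*y + b*y') = a*(x+y) + b*(x'+y') := by ring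
  have hkey : (a*x + b*x') / ((a*x + b*x') + (a*y + b*y'))
      = a*(x+y) / (a*(x+y) + b*(x'+y')) * (x/(x+y))
        + b*(x'+y') / (a*(x+y) + b*(x'+y')) * (x'/(x'+y')) := by
    rw [hsum]
    field_simp
  unfold evPl
  rw [hkey, hsum]
  calc (a*(x+y) + b*(x'+y')) *
        A (a*(x+y) / (a*(x+y) + b*(x'+y')) * (x/(x+y))
          + b*(x'+y') / (a*(x+y) + b*(x'+y')) * (x'/(x'+y')))
      ≤ (a*(x+y) + b*(x'+y')) *
        (a*(x+y) / (a*(x+y) + b*(x'+y')) * A (x/(x+y))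
          + b*(x'+y') / (a*(x+y) + b*(x'+y')) * A (x'/(x'+y'))) :=
        mul_le_mul_of_nonneg_left hA hS.le
    _ = a * ((x+y) * A (x/(x+y))) + b * ((x'+y') * A (x'/(x'+y'))) := by
        field_simp

lemma evPl_mono_left (A : ℝ → ℝ) (hconv : ConvexOn ℝ (Icc (0:ℝ) 1) A)
    (hbounds : ∀ w ∈ Icc (0:ℝ) 1, max w (1-w) ≤ A w ∧ A w ≤ 1)
    {x₁ x₂ y : ℝ} (hx₁ : 0 ≤ x₁) (h12 : x₁ ≤ x₂) (hy : 0 ≤ y) :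
    evPl A x₁ y ≤ evPl A x₂ y := by
  rcases eq_or_lt_of_le (le_trans hx₁ h12) with h | h
  · have : x₁ = x₂ := by linarith [h12, hx₁]
    rw [this]
  · set θ : ℝ := x₁ / x₂ with hθdef
    have hθ0 : 0 ≤ θ := div_nonneg hx₁ h.le
    have hθ1 : θ ≤ 1 := (div_le_one h).2 h12
    have key := evPl_sublinear A hconv hbounds h.le hy (le_refl (0:ℝ)) hy hθ0
      (by linarith : (0:ℝ) ≤ 1 - θ)
    have e1 : θ * x₂ + (1-θ) * 0 = x₁ := by
      rw [hθdef]; field_simp; ring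
    have e2 : θ * y + (1-θ) * y = y := by ring
    rw [e1, e2, evPl_zero_left A hbounds] at key
    have hyle : y ≤ evPl A x₂ y := le_evPl_right A hbounds h.le hy
    nlinarith [key, mul_le_mul_of_nonneg_left hyle (by linarith : (0:ℝ) ≤ 1 - θ)]

lemma evPl_mono_right (A : ℝ → ℝ) (hconv : ConvexOn ℝ (Icc (0:ℝ) 1) A)
    (hbounds : ∀ w ∈ Icc (0:ℝ) 1, max w (1-w) ≤ A w ∧ A w ≤ 1)
    {x y₁ y₂ : ℝ} (hx : 0 ≤ x) (hy₁ : 0 ≤ y₁) (h12 : y₁ ≤ y₂) :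
    evPl A x y₁ ≤ evPl A x y₂ := by
  rcases eq_or_lt_of_le (le_trans hy₁ h12) with h | h
  · have : y₁ = y₂ := by linarith [h12, hy₁]
    rw [this]
  · set θ : ℝ := y₁ / y₂ with hθdef
    have hθ0 : 0 ≤ θ := div_nonneg hy₁ h.le
    have hθ1 : θ ≤ 1 := (div_le_one h).2 h12
    have key := evPl_sublinear A hconv hbounds hx h.le hx (le_refl (0:ℝ)) hθ0
      (by linarith : (0:ℝ) ≤ 1 - θ)
    have e1 : θ * x + (1-θ) * x = x := by ring
    have e2 : θ * y₂ + (1-θ) * 0 = y₁ := by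
      rw [hθdef]; field_simp; ring
    rw [e1, e2, evPl_zero_right A hbounds hx] at key
    have hxle : x ≤ evPl A x y₂ := le_evPl_left A hbounds hx h.le
    nlinarith [key, mul_le_mul_of_nonneg_left hxle (by linarith : (0:ℝ) ≤ 1 - θ)]

/-- Submodularity of the stable tail dependence function. -/
lemma evPl_submod (A : ℝ → ℝ) (hconv : ConvexOn ℝ (Icc (0:ℝ) 1) A)
    (hbounds : ∀ w ∈ Icc (0:ℝ) 1, max w (1-w) ≤ A w ∧ A w ≤ 1)
    {x₁ x₂ y₁ y₂ : ℝ} (hx₁ : 0 ≤ x₁) (hx12 : x₁ ≤ x₂) (hy₁ : 0 ≤ y₁) (hy12 : y₁ ≤ y₂) :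
    evPl A x₁ y₁ + evPl A x₂ y₂ ≤ evPl A x₁ y₂ + evPl A x₂ y₁ := by
  rcases eq_or_lt_of_le hx12 with h | hx ; · rw [h]; try linarith
  rcases eq_or_lt_of_le hy12 with h | hy ; · rw [h]; try linarith
  have hx₂ : 0 < x₂ := lt_of_le_of_lt hx₁ hx
  have hy₂ : 0 < y₂ := lt_of_le_of_lt hy₁ hy
  have hD : 0 < x₂ * y₂ - x₁ * y₁ := by nlinarith
  set D : ℝ := x₂ * y₂ - x₁ * y₁ with hDdef
  set l1 : ℝ := x₁ * (y₂ - y₁) / D with hl1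
  set m1 : ℝ := y₁ * (x₂ - x₁) / D with hm1
  set a1 : ℝ := y₂ * (x₂ - x₁) / D with ha1
  set b1 : ℝ := x₂ * (y₂ - y₁) / D with hb1
  have hl1' : 0 ≤ l1 := div_nonneg (mul_nonneg hx₁ (by linarith)) hD.le
  have hm1' : 0 ≤ m1 := div_nonneg (mul_nonneg hy₁ (by linarith)) hD.le
  have ha1' : 0 ≤ a1 := div_nonneg (mul_nonneg hy₂.le (by linarith)) hD.le
  have hb1' : 0 ≤ b1 := div_nonneg (mul_nonneg hx₂.le (by linarith)) hD.le
  have hDne : D ≠ 0 := hD.ne'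
  have c1 := evPl_sublinear A hconv hbounds hx₂.le hy₁ hx₁ (le_trans hy₁ hy12) hl1' hm1'
  have c2 := evPl_sublinear A hconv hbounds hx₂.le hy₁ hx₁ (le_trans hy₁ hy12) ha1' hb1'
  have i1 : l1 * x₂ + m1 * x₁ = x₁ := by
    rw [hl1, hm1]; field_simp; rw [hDdef]; ring
  have i2 : l1 * y₁ + m1 * y₂ = y₁ := by
    rw [hl1, hm1]; field_simp; rw [hDdef]; ring
  have i3 : a1 * x₂ + b1 * x₁ = x₂ := by
    rw [ha1, hb1]; field_simp; rw [hDdef]; ring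
  have i4 : a1 * y₁ + b1 * y₂ = y₂ := by
    rw [ha1, hb1]; field_simp; rw [hDdef]; ring
  rw [i1, i2] at c1
  rw [i3, i4] at c2
  have hs1 : l1 + a1 = 1 := by
    rw [hl1, ha1]; field_simp; rw [hDdef]; ring
  have hs2 : m1 + b1 = 1 := by
    rw [hm1, hb1]; field_simp; rw [hDdef]; ring
  have hP1 : l1 * evPl A x₂ y₁ + a1 * evPl A x₂ y₁ = evPl A x₂ y₁ := by
    rw [← add_mul, hs1, one_mul]
  have hP2 : m1 * evPl A x₁ y₂ + b1 * evPl A x₁ y₂ = evPl A x₁ y₂ := by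
    rw [← add_mul, hs2, one_mul]
  linarith [c1, c2, hP1, hP2]

/-- Elementary four-point inequality for `exp (-·)`, ordered case. -/
lemma exp_four_aux {a b c d : ℝ} (hbc : b ≤ c) (hcd : c ≤ d) (habcd : a + d ≤ b + c) :
    Real.exp (-b) + Real.exp (-c) ≤ Real.exp (-a) + Real.exp (-d) := by
  have E1 : Real.exp (-a) = Real.exp (-b) * Real.exp (b - a) := by
    rw [← Real.exp_add]; ring_nf
  have E2 : Real.exp (-d) = Real.exp (-c) * Real.exp (c - d) := by
    rw [← Real.exp_add]; ring_nf
  have H1 : (b - a) + 1 ≤ Real.exp (b - a) := by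
    have := Real.add_one_le_exp (b - a); linarith
  have H2 : (c - d) + 1 ≤ Real.exp (c - d) := by
    have := Real.add_one_le_exp (c - d); linarith
  have H3 : Real.exp (-c) ≤ Real.exp (-b) := Real.exp_le_exp.2 (by linarith)
  have K1 : Real.exp (-b) * ((b - a) + 1) ≤ Real.exp (-b) * Real.exp (b - a) :=
    mul_le_mul_of_nonneg_left H1 (Real.exp_pos _).le
  have K2 : Real.exp (-c) * (1 - Real.exp (c - d)) ≤ Real.exp (-c) * (d - c) :=
    mul_le_mul_of_nonneg_left (by linarith) (Real.exp_pos _).le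
  have K3 : Real.exp (-c) * (d - c) ≤ Real.exp (-b) * (d - c) :=
    mul_le_mul_of_nonneg_right H3 (by linarith)
  have K4 : Real.exp (-b) * (d - c) ≤ Real.exp (-b) * ((b - a)) :=
    mul_le_mul_of_nonneg_left (by linarith) (Real.exp_pos _).le
  nlinarith [K1, K2, K3, K4, E1, E2]

lemma exp_four {a b c d : ℝ} (hbd : b ≤ d) (hcd : c ≤ d) (habcd : a + d ≤ b + c) :
    Real.exp (-b) + Real.exp (-c) ≤ Real.exp (-a) + Real.exp (-d) := by
  rcases le_total b c with h | h
  · exact exp_four_aux h hcd habcd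
  · have := exp_four_aux h hbd (by linarith)
    linarith

theorem ev_copula_two_increasing (A : ℝ → ℝ) (hconv : ConvexOn ℝ (Icc (0:ℝ) 1) A)
    (hbounds : ∀ w ∈ Icc (0:ℝ) 1, max w (1-w) ≤ A w ∧ A w ≤ 1) :
    ∀ u u' v v' : ℝ, 0 < u → u ≤ u' → u' ≤ 1 → 0 < v → v ≤ v' → v' ≤ 1 →
      0 ≤ Real.exp (Real.log (u'*v') * A (Real.log u' / Real.log (u'*v')))
        - Real.exp (Real.log (u'*v) * A (Real.log u' / Real.log (u'*v)))
        - Real.exp (Real.log (u*v') * A (Real.log u / Real.log (u*v')))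
        + Real.exp (Real.log (u*v) * A (Real.log u / Real.log (u*v))) := by
  intro u u' v v' hu huu' hu'1 hv hvv' hv'1
  have hu' : 0 < u' := lt_of_lt_of_le hu huu'
  have hv' : 0 < v' := lt_of_lt_of_le hv hvv'
  have hu1 : u ≤ 1 := le_trans huu' hu'1
  have hv1 : v ≤ 1 := le_trans hvv' hv'1
  have key : ∀ p q : ℝ, (p + q) * A (p / (p + q)) = -(evPl A (-p) (-q)) := by
    intro p q
    unfold evPl
    rw [show -p + -q = -(p+q) by ring, neg_div_neg_eq]
    ring
  have hx₁ : 0 ≤ -Real.log u' := neg_nonneg.2 (Real.log_nonpos hu'.le hu'1)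
  have hy₁ : 0 ≤ -Real.log v' := neg_nonneg.2 (Real.log_nonpos hv'.le hv'1)
  have hx12 : -Real.log u' ≤ -Real.log u := neg_le_neg (Real.log_le_log hu huu')
  have hy12 : -Real.log v' ≤ -Real.log v := neg_le_neg (Real.log_le_log hv hvv')
  have hx₂ : 0 ≤ -Real.log u := le_trans hx₁ hx12
  have hy₂ : 0 ≤ -Real.log v := le_trans hy₁ hy12
  have hbd : evPl A (-Real.log u') (-Real.log v)
      ≤ evPl A (-Real.log u) (-Real.log v) :=
    evPl_mono_left A hconv hbounds hx₁ hx12 hy₂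
  have hcd : evPl A (-Real.log u) (-Real.log v')
      ≤ evPl A (-Real.log u) (-Real.log v) :=
    evPl_mono_right A hconv hbounds hx₂ hy₁ hy12
  have hsum : evPl A (-Real.log u') (-Real.log v') + evPl A (-Real.log u) (-Real.log v)
      ≤ evPl A (-Real.log u') (-Real.log v) + evPl A (-Real.log u) (-Real.log v') :=
    evPl_submod A hconv hbounds hx₁ hx12 hy₁ hy12
  have main := exp_four hbd hcd hsum
  rw [Real.log_mul hu'.ne' hv'.ne', Real.log_mul hu'.ne' hv.ne',
    Real.log_mul hu.ne' hv'.ne', Real.log_mul hu.ne' hv.ne',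
    key (Real.log u') (Real.log v'), key (Real.log u') (Real.log v),
    key (Real.log u) (Real.log v'), key (Real.log u) (Real.log v)]
  linarith [main]
end
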